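/- For real polynomials F, G of degree at most 4, let ⟨F,G⟩₄ denote the (constant) polynomial F''''G − F'''G' + F''G'' − F'G''' + FG''''; and for a real quadratic a and a polynomial R of degree at most 4, let τ(a,R) = 6a''R − 3a'R' + aR'' (a polynomial of degree at most 2). Then for all real quadratics p, q and every real polynomial R of degree at most 4, the following three conditions are equivalent: (i) ⟨pq, R⟩₄ = 0, where pq is the degree ≤ 4 product polynomial; (ii) ⟨τ(q,R), p⟩ = 0; (iii) ⟨τ(p,R), q⟩ = 0. Here for quadratics a, b, ⟨a,b⟩ = 2a₁b₁ − (a₂b₀ + a₀b₂). -/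

import Mathlib

/-- A quartic `a₀z⁴ + a₁z³ + a₂z² + a₃z + a₄` and its derivatives. -/
def quartic (a0 a1 a2 a3 a4 z : ℝ) : ℝ := a0 * z ^ 4 + a1 * z ^ 3 + a2 * z ^ 2 + a3 * z + a4
def quarticD1 (a0 a1 a2 a3 a4 z : ℝ) : ℝ := 4 * a0 * z ^ 3 + 3 * a1 * z ^ 2 + 2 * a2 * z + a3
def quarticD2 (a0 a1 a2 a3 a4 z : ℝ) : ℝ := 12 * a0 * z ^ 2 + 6 * a1 * z + 2 * a2
def quarticD3 (a0 a1 a2 a3 a4 z : ℝ) : ℝ := 24 * a0 * z + 6 * a1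

/-- The apolarity pairing `⟨F,G⟩₄ = F''''G − F'''G' + F''G'' − F'G''' + FG''''`
of two quartics, evaluated at `z` (it is constant in `z`). -/
def apolarity4 (f0 f1 f2 f3 f4 g0 g1 g2 g3 g4 z : ℝ) : ℝ :=
  24 * f0 * quartic g0 g1 g2 g3 g4 z
    - quarticD3 f0 f1 f2 f3 f4 z * quarticD1 g0 g1 g2 g3 g4 z
    + quarticD2 f0 f1 f2 f3 f4 z * quarticD2 g0 g1 g2 g3 g4 z
    - quarticD1 f0 f1 f2 f3 f4 z * quarticD3 g0 g1 g2 g3 g4 z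
    + quartic f0 f1 f2 f3 f4 z * (24 * g0)

/-- The second transvectant `τ(a,R) = 6a''R − 3a'R' + aR''` of a quadratic
`a(z) = a₀z² + 2a₁z + a₂` with a quartic `R`. -/
def tau2 (a0 a1 a2 r0 r1 r2 r3 r4 z : ℝ) : ℝ :=
  6 * (2 * a0) * quartic r0 r1 r2 r3 r4 z
    - 3 * (2 * a0 * z + 2 * a1) * quarticD1 r0 r1 r2 r3 r4 z
    + (a0 * z ^ 2 + 2 * a1 * z + a2) * quarticD2 r0 r1 r2 r3 r4 z

/-!
For quadratics `a`, `b` and a quartic `R`, the transvectant `τ(a,R)` is again a quadratic, with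
coefficients bilinear in `a` and `R`, and expanding shows `⟨τ(a,R), b⟩ = -½ ⟨ab, R⟩₄`. The right-hand
side is symmetric in `a` and `b`, so the three conditions all say that one trilinear form in
`(p, q, R)` vanishes.
-/

/-- `⟨a,b⟩` for the quadratics `a₀z² + 2a₁z + a₂` and `b₀z² + 2b₁z + b₂`. -/
def quadInner (a0 a1 a2 b0 b1 b2 : ℝ) : ℝ := 2 * a1 * b1 - (a2 * b0 + a0 * b2)

lemma coeffs_eq_of_forall_quadratic_eq {a0 a1 a2 b0 b1 b2 : ℝ}
    (h : ∀ z : ℝ, a0 * z ^ 2 + 2 * a1 * z + a2 = b0 * z ^ 2 + 2 * b1 * z + b2) :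
    a0 = b0 ∧ a1 = b1 ∧ a2 = b2 := by
  have h0 := h 0
  have h1 := h 1
  have h2 := h (-1)
  norm_num at h0 h1 h2
  exact ⟨by linarith, by linarith, by linarith⟩

lemma tau2_eq_quadratic (a0 a1 a2 r0 r1 r2 r3 r4 z : ℝ) :
    tau2 a0 a1 a2 r0 r1 r2 r3 r4 z =
      (2 * a0 * r2 - 6 * a1 * r1 + 12 * a2 * r0) * z ^ 2
        + 2 * (3 * a0 * r3 - 4 * a1 * r2 + 3 * a2 * r1) * z
        + (12 * a0 * r4 - 6 * a1 * r3 + 2 * a2 * r2) := by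
  unfold tau2 quartic quarticD1 quarticD2
  ring

/-- `⟨τ(a,R), b⟩`, with the coefficients of `τ(a,R)` from `tau2_eq_quadratic`. -/
def tau2Inner (a0 a1 a2 r0 r1 r2 r3 r4 b0 b1 b2 : ℝ) : ℝ :=
  quadInner (2 * a0 * r2 - 6 * a1 * r1 + 12 * a2 * r0) (3 * a0 * r3 - 4 * a1 * r2 + 3 * a2 * r1)
    (12 * a0 * r4 - 6 * a1 * r3 + 2 * a2 * r2) b0 b1 b2

lemma tau2Inner_comm (a0 a1 a2 r0 r1 r2 r3 r4 b0 b1 b2 : ℝ) :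
    tau2Inner a0 a1 a2 r0 r1 r2 r3 r4 b0 b1 b2 = tau2Inner b0 b1 b2 r0 r1 r2 r3 r4 a0 a1 a2 := by
  unfold tau2Inner quadInner
  ring

lemma exists_tau2_eq_and_quadInner_eq_zero_iff (a0 a1 a2 r0 r1 r2 r3 r4 b0 b1 b2 : ℝ) :
    (∃ e0 e1 e2 : ℝ,
        (∀ z : ℝ, tau2 a0 a1 a2 r0 r1 r2 r3 r4 z = e0 * z ^ 2 + 2 * e1 * z + e2) ∧
        quadInner e0 e1 e2 b0 b1 b2 = 0)
      ↔ tau2Inner a0 a1 a2 r0 r1 r2 r3 r4 b0 b1 b2 = 0 := by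
  constructor
  · rintro ⟨e0, e1, e2, hτ, he⟩
    obtain ⟨rfl, rfl, rfl⟩ :=
      coeffs_eq_of_forall_quadratic_eq fun z => (tau2_eq_quadratic ..).symm.trans (hτ z)
    exact he
  · exact fun h => ⟨_, _, _, tau2_eq_quadratic a0 a1 a2 r0 r1 r2 r3 r4, h⟩

lemma apolarity4_mul_eq (a0 a1 a2 b0 b1 b2 r0 r1 r2 r3 r4 z : ℝ) :
    apolarity4 (a0 * b0) (2 * a0 * b1 + 2 * a1 * b0) (a0 * b2 + 4 * a1 * b1 + a2 * b0)
        (2 * a1 * b2 + 2 * a2 * b1) (a2 * b2) r0 r1 r2 r3 r4 z =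
      -2 * tau2Inner b0 b1 b2 r0 r1 r2 r3 r4 a0 a1 a2 := by
  unfold apolarity4 quartic quarticD1 quarticD2 quarticD3 tau2Inner quadInner
  ring

/-- For all real quadratics `p`, `q` and every quartic `R`, the following are
equivalent: (i) `⟨pq, R⟩₄ = 0`; (ii) `⟨τ(q,R), p⟩ = 0`; (iii) `⟨τ(p,R), q⟩ = 0`,
where `⟨a,b⟩ = 2a₁b₁ − (a₂b₀ + a₀b₂)` for quadratics `a(z) = a₀z² + 2a₁z + a₂`. -/
theorem apolarity_transvectant_equivalence
    (p0 p1 p2 q0 q1 q2 r0 r1 r2 r3 r4 : ℝ) :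
    ((∀ z : ℝ, apolarity4 (p0 * q0) (2 * p0 * q1 + 2 * p1 * q0)
        (p0 * q2 + 4 * p1 * q1 + p2 * q0) (2 * p1 * q2 + 2 * p2 * q1) (p2 * q2)
        r0 r1 r2 r3 r4 z = 0)
      ↔ (∃ e0 e1 e2 : ℝ,
          (∀ z : ℝ, tau2 q0 q1 q2 r0 r1 r2 r3 r4 z = e0 * z ^ 2 + 2 * e1 * z + e2) ∧
          2 * e1 * p1 - (e2 * p0 + e0 * p2) = 0))
    ∧ ((∃ e0 e1 e2 : ℝ,
          (∀ z : ℝ, tau2 q0 q1 q2 r0 r1 r2 r3 r4 z = e0 * z ^ 2 + 2 * e1 * z + e2) ∧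
          2 * e1 * p1 - (e2 * p0 + e0 * p2) = 0)
      ↔ (∃ f0 f1 f2 : ℝ,
          (∀ z : ℝ, tau2 p0 p1 p2 r0 r1 r2 r3 r4 z = f0 * z ^ 2 + 2 * f1 * z + f2) ∧
          2 * f1 * q1 - (f2 * q0 + f0 * q2) = 0)) := by
  have hτ := exists_tau2_eq_and_quadInner_eq_zero_iff
  simp only [quadInner] at hτ
  simp only [apolarity4_mul_eq, hτ, tau2Inner_comm q0 q1 q2 r0 r1 r2 r3 r4 p0 p1 p2]
  simp
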